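/- arXiv:1705.10595 — 2 statements merged into one kernel-verified Lean document; each statement's English description precedes it below -/
import Mathlib

section
/- Parallel composition of constructions (Theorem 'composability', part 2): Assume d is context-insensitive, and that for all γ₁, γ₂ ∈ Σ_H there exists a converter γ₁|γ₂ ∈ Σ_H with (γ₁|γ₂)(r ∥ s) = (γ₁ r) ∥ (γ₂ s) for all r,s ∈ Φ, and likewise for all σ₁, σ₂ ∈ Σ_E there exists σ₁|σ₂ ∈ Σ_E with (σ₁|σ₂)(r ∥ s) = (σ₁ r) ∥ (σ₂ s) for all r,s ∈ Φ. If γ₁ ∈ Σ_H constructs S₁ from R₁ with error ε₁ and γ₂ ∈ Σ_H constructs S₂ from R₂ with error ε₂, then γ₁|γ₂ constructs S₁ ∥ S₂ from R₁ ∥ R₂ with error ε₁ + ε₂. -/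
/-- A pseudo-metric on the type of atomic resources. -/
structure IsPseudoMetric {Φ : Type*} (d : Φ → Φ → ℝ) : Prop where
  nonneg : ∀ r s, 0 ≤ d r s
  refl : ∀ r, d r r = 0
  symm : ∀ r s, d r s = d s r
  triangle : ∀ r s t, d r t ≤ d r s + d s t

/-- The ε-ball around a specification R. -/
def specBall {Φ : Type*} (d : Φ → Φ → ℝ) (R : Set Φ) (ε : ℝ) : Set Φ :=
  {s | ∃ r ∈ R, d r s ≤ ε}

/-- S* := the set of all σ s for σ a simulator and s ∈ S. -/
def specStar {Φ : Type*} (SimE : Set (Φ → Φ)) (S : Set Φ) : Set Φ :=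
  {t | ∃ σ ∈ SimE, ∃ s ∈ S, t = σ s}

/-- π constructs S from R with error ε: πR ⊆ (S*)^ε. -/
def Constructs {Φ : Type*} (d : Φ → Φ → ℝ) (SimE : Set (Φ → Φ))
    (π : Φ → Φ) (R S : Set Φ) (ε : ℝ) : Prop :=
  π '' R ⊆ specBall d (specStar SimE S) ε

/-- The pseudo-metric d is context-insensitive with respect to ∥. -/
def ContextInsensitive {Φ : Type*} (d : Φ → Φ → ℝ) (par : Φ → Φ → Φ) : Prop :=
  ∀ r s t, d (par r t) (par s t) ≤ d r s ∧ d (par t r) (par t s) ≤ d r s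

/-- Parallel composition of specifications: R ∥ S := {r ∥ s : r ∈ R, s ∈ S}. -/
def parSet {Φ : Type*} (par : Φ → Φ → Φ) (R S : Set Φ) : Set Φ :=
  {t | ∃ r ∈ R, ∃ s ∈ S, t = par r s}

section

variable {Φ : Type*} {d : Φ → Φ → ℝ} {par : Φ → Φ → Φ}

theorem dist_par_le_add (htri : ∀ r s t, d r t ≤ d r s + d s t)
    (hci : ContextInsensitive d par) (a a' b b' : Φ) :
    d (par a b) (par a' b') ≤ d a a' + d b b' :=
  calc d (par a b) (par a' b') ≤ d (par a b) (par a' b) + d (par a' b) (par a' b') :=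
        htri _ _ _
    _ ≤ d a a' + d b b' := add_le_add (hci _ _ _).1 (hci _ _ _).2

theorem specBall_mono {A B : Set Φ} (hAB : A ⊆ B) (ε : ℝ) : specBall d A ε ⊆ specBall d B ε :=
  fun _ ⟨a, ha, hda⟩ => ⟨a, hAB ha, hda⟩

theorem par_mem_specBall_parSet (htri : ∀ r s t, d r t ≤ d r s + d s t)
    (hci : ContextInsensitive d par) {A B : Set Φ} {x y : Φ} {ε₁ ε₂ : ℝ}
    (hx : x ∈ specBall d A ε₁) (hy : y ∈ specBall d B ε₂) :
    par x y ∈ specBall d (parSet par A B) (ε₁ + ε₂) := by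
  obtain ⟨a, ha, hxa⟩ := hx
  obtain ⟨b, hb, hyb⟩ := hy
  exact ⟨par a b, ⟨a, ha, b, hb, rfl⟩,
    (dist_par_le_add htri hci a x b y).trans (add_le_add hxa hyb)⟩

theorem parSet_specStar_subset {SimE : Set (Φ → Φ)}
    (hEpar : ∀ σ₁ ∈ SimE, ∀ σ₂ ∈ SimE, ∃ σ ∈ SimE, ∀ r s, σ (par r s) = par (σ₁ r) (σ₂ s))
    (S₁ S₂ : Set Φ) :
    parSet par (specStar SimE S₁) (specStar SimE S₂) ⊆ specStar SimE (parSet par S₁ S₂) := by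
  rintro _ ⟨_, ⟨σ₁, hσ₁, s₁, hs₁, rfl⟩, _, ⟨σ₂, hσ₂, s₂, hs₂, rfl⟩, rfl⟩
  obtain ⟨σ, hσ, hσpar⟩ := hEpar σ₁ hσ₁ σ₂ hσ₂
  exact ⟨σ, hσ, par s₁ s₂, ⟨s₁, hs₁, s₂, hs₂, rfl⟩, (hσpar s₁ s₂).symm⟩

end

theorem parallel_composition_general {Φ : Type*} (d : Φ → Φ → ℝ) (hd : IsPseudoMetric d)
    (par : Φ → Φ → Φ) (hci : ContextInsensitive d par)
    (SimE : Set (Φ → Φ))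
    (hEpar : ∀ σ₁ ∈ SimE, ∀ σ₂ ∈ SimE, ∃ σ ∈ SimE,
      ∀ r s, σ (par r s) = par (σ₁ r) (σ₂ s))
    (γ₁ γ₂ : Φ → Φ)
    (g : Φ → Φ) (hgpar : ∀ r s, g (par r s) = par (γ₁ r) (γ₂ s))
    (R₁ R₂ S₁ S₂ : Set Φ) (ε₁ ε₂ : ℝ)
    (h1 : Constructs d SimE γ₁ R₁ S₁ ε₁) (h2 : Constructs d SimE γ₂ R₂ S₂ ε₂) :
    Constructs d SimE g (parSet par R₁ R₂) (parSet par S₁ S₂) (ε₁ + ε₂) := by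
  rintro _ ⟨_, ⟨r, hr, s, hs, rfl⟩, rfl⟩
  rw [hgpar]
  exact specBall_mono (parSet_specStar_subset hEpar S₁ S₂) _
    (par_mem_specBall_parSet hd.triangle hci (h1 ⟨r, hr, rfl⟩) (h2 ⟨s, hs, rfl⟩))

/-- Parallel composition of constructions. -/
theorem parallel_composition {Φ : Type*} (d : Φ → Φ → ℝ) (hd : IsPseudoMetric d)
    (par : Φ → Φ → Φ) (hci : ContextInsensitive d par)
    (ProtH SimE : Set (Φ → Φ))
    (hEpar : ∀ σ₁ ∈ SimE, ∀ σ₂ ∈ SimE, ∃ σ ∈ SimE,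
      ∀ r s, σ (par r s) = par (σ₁ r) (σ₂ s))
    (γ₁ γ₂ : Φ → Φ) (hγ₁ : γ₁ ∈ ProtH) (hγ₂ : γ₂ ∈ ProtH)
    (g : Φ → Φ) (hg : g ∈ ProtH) (hgpar : ∀ r s, g (par r s) = par (γ₁ r) (γ₂ s))
    (R₁ R₂ S₁ S₂ : Set Φ) (ε₁ ε₂ : ℝ) (hε₁ : 0 ≤ ε₁) (hε₂ : 0 ≤ ε₂)
    (h1 : Constructs d SimE γ₁ R₁ S₁ ε₁) (h2 : Constructs d SimE γ₂ R₂ S₂ ε₂) :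
    Constructs d SimE g (parSet par R₁ R₂) (parSet par S₁ S₂) (ε₁ + ε₂) :=
  parallel_composition_general d hd par hci SimE hEpar γ₁ γ₂ g hgpar R₁ R₂ S₁ S₂ ε₁ ε₂ h1 h2
end

section
/- Extractors for normalized states work for subnormalized states: Let n, d, m, k be natural numbers with k + 1 ≤ n. If Ext : {0,1}^n × {0,1}^d → {0,1}^m is a quantum-proof (k, ε)-strong extractor for normalized states, then Ext is a quantum-proof (k+1, 2ε)-strong extractor for subnormalized states. -/
noncomputable section
open Matrix
open scoped ComplexOrder

/-- The guessing probability p_guess(X|E)_ρ: supremum over POVMs (Γ_x)_x of ∑_x tr(Γ_x ρ_x). -/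
def pGuess {X E : Type*} [Fintype X] [Fintype E] [DecidableEq E]
    (ρ : X → Matrix E E ℂ) : ℝ :=
  sSup {p : ℝ | ∃ Γ : X → Matrix E E ℂ,
    (∀ x, (Γ x).PosSemidef) ∧ (∑ x, Γ x = 1) ∧ p = ∑ x, ((Γ x * ρ x).trace).re}

/-- The trace norm ‖A‖₁ = tr √(A†A) of a square complex matrix. -/
def traceNorm {E : Type*} [Fintype E] [DecidableEq E] (A : Matrix E E ℂ) : ℝ :=
  ((Matrix.posSemidef_conjTranspose_mul_self A).1.eigenvectorUnitary.1 *
      diagonal (((↑) : ℝ → ℂ) ∘ (√·) ∘ (Matrix.posSemidef_conjTranspose_mul_self A).1.eigenvalues) *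
      (star (Matrix.posSemidef_conjTranspose_mul_self A).1.eigenvectorUnitary :
        Matrix E E ℂ)).trace.re

/-- The extractor error of Ext on the cq state ρ:
½ ∑_z ∑_s ‖ 2^{-d} ∑_{x : Ext(x,z)=s} ρ_x − 2^{-d-m} ρ_E ‖₁ with ρ_E = ∑_x ρ_x. -/
def extractorError {n d m dE : ℕ}
    (Ext : (Fin n → Bool) → (Fin d → Bool) → (Fin m → Bool))
    (ρ : (Fin n → Bool) → Matrix (Fin dE) (Fin dE) ℂ) : ℝ :=
  (1 / 2) * ∑ z : Fin d → Bool, ∑ s : Fin m → Bool,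
    traceNorm (((2 : ℂ) ^ d)⁻¹ • (∑ x ∈ Finset.univ.filter fun x => Ext x z = s, ρ x)
      - ((2 : ℂ) ^ (d + m))⁻¹ • ∑ x, ρ x)

/-- Ext is a quantum-proof (k,ε)-strong extractor for subnormalized states. -/
def IsQProofStrongExtractorSub {n d m : ℕ}
    (Ext : (Fin n → Bool) → (Fin d → Bool) → (Fin m → Bool)) (k ε : ℝ) : Prop :=
  ∀ (dE : ℕ) (ρ : (Fin n → Bool) → Matrix (Fin dE) (Fin dE) ℂ),
    (∀ x, (ρ x).PosSemidef) → (∑ x, (ρ x).trace.re ≤ 1) →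
    pGuess ρ ≤ (2 : ℝ) ^ (-k) → extractorError Ext ρ ≤ ε

/-- Ext is a quantum-proof (k,ε)-strong extractor for normalized states. -/
def IsQProofStrongExtractorNorm {n d m : ℕ}
    (Ext : (Fin n → Bool) → (Fin d → Bool) → (Fin m → Bool)) (k ε : ℝ) : Prop :=
  ∀ (dE : ℕ) (ρ : (Fin n → Bool) → Matrix (Fin dE) (Fin dE) ℂ),
    (∀ x, (ρ x).PosSemidef) → (∑ x, (ρ x).trace.re = 1) →
    pGuess ρ ≤ (2 : ℝ) ^ (-k) → extractorError Ext ρ ≤ ε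

/-!
Pad the subnormalized state with a flag orthogonal to E: `ρ'_x = ρ_x ⊕ c` with
`c = (1 - tr ρ) / 2ⁿ`, which is normalized. A POVM on the padded space compresses to POVMs on
the two blocks, and the flag carries no information about `x`, so
`p_guess(ρ') ≤ p_guess(ρ) + c ≤ 2^(-k-1) + 2^(-n) ≤ 2^(-k)`. The trace norm is additive on
block-diagonal matrices, so the extractor error of `ρ` is at most that of `ρ'`, hence at most
`ε`; and `ε ≥ 0` because errors are nonnegative, so it is also at most `2ε`.
-/

open scoped MatrixOrder

namespace Matrix

variable {R 𝕜 E F : Type*} [Fintype E] [Fintype F]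

lemma trace_reindex [AddCommMonoid R] (e : E ≃ F) (A : Matrix E E R) :
    (reindex e e A).trace = A.trace := by
  simp [trace, ← e.sum_comp]

lemma trace_fromBlocks [AddCommMonoid R] (A : Matrix E E R) (B : Matrix E F R) (C : Matrix F E R)
    (D : Matrix F F R) : (fromBlocks A B C D).trace = A.trace + D.trace := by
  simp [trace, Fintype.sum_sum_type]

lemma trace_mul_reindex_fromBlocks_zero [NonUnitalNonAssocSemiring R] {G : Type*} [Fintype G]
    (e : E ⊕ F ≃ G) (M : Matrix G G R) (A : Matrix E E R) (B : Matrix F F R) :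
    (M * reindex e e (fromBlocks A 0 0 B)).trace =
      (M.submatrix (e ∘ Sum.inl) (e ∘ Sum.inl) * A).trace +
        (M.submatrix (e ∘ Sum.inr) (e ∘ Sum.inr) * B).trace := by
  simp [trace, mul_apply, Fintype.sum_sum_type, ← e.sum_comp]

lemma PosSemidef.re_trace_nonneg {A : Matrix E E ℂ} (hA : A.PosSemidef) : 0 ≤ A.trace.re :=
  (Complex.nonneg_iff.mp hA.trace_nonneg).1

lemma PosSemidef.re_trace_mul_nonneg {A B : Matrix E E ℂ} (hA : A.PosSemidef)
    (hB : B.PosSemidef) : 0 ≤ (A * B).trace.re := by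
  classical
  obtain ⟨a, rfl⟩ := CStarAlgebra.nonneg_iff_eq_star_mul_self.mp hA.nonneg
  rw [mul_assoc, trace_mul_comm, star_eq_conjTranspose]
  exact (hB.mul_mul_conjTranspose_same a).re_trace_nonneg

variable [RCLike 𝕜]

lemma PosSemidef.fromBlocks_zero {A : Matrix E E 𝕜} {B : Matrix F F 𝕜}
    (hA : A.PosSemidef) (hB : B.PosSemidef) : (fromBlocks A 0 0 B).PosSemidef := by
  classical
  obtain ⟨a, rfl⟩ := CStarAlgebra.nonneg_iff_eq_star_mul_self.mp hA.nonneg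
  obtain ⟨b, rfl⟩ := CStarAlgebra.nonneg_iff_eq_star_mul_self.mp hB.nonneg
  simpa [fromBlocks_multiply, fromBlocks_conjTranspose, star_eq_conjTranspose] using
    posSemidef_conjTranspose_mul_self (fromBlocks a 0 0 b)

variable [DecidableEq E] [DecidableEq F]

lemma cfcAbs_reindex (e : E ≃ F) (A : Matrix E E 𝕜) :
    CFC.abs (reindex e e A) = reindex e e (CFC.abs A) :=
  CFC.sqrt_unique
    (by simp only [reindex_apply, submatrix_mul_equiv, CFC.abs_mul_abs, star_eq_conjTranspose,
      conjTranspose_submatrix])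
    ((CFC.abs_nonneg A).posSemidef.submatrix _).nonneg

lemma cfcAbs_fromBlocks_zero (A : Matrix E E 𝕜) (B : Matrix F F 𝕜) :
    CFC.abs (fromBlocks A 0 0 B) = fromBlocks (CFC.abs A) 0 0 (CFC.abs B) :=
  CFC.sqrt_unique
    (by simp [fromBlocks_multiply, fromBlocks_conjTranspose, CFC.abs_mul_abs,
      star_eq_conjTranspose])
    ((CFC.abs_nonneg A).posSemidef.fromBlocks_zero (CFC.abs_nonneg B).posSemidef).nonneg

end Matrix

open Matrix Finset

section TraceNorm

variable {E F : Type*} [Fintype E] [Fintype F] [DecidableEq E] [DecidableEq F]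

lemma traceNorm_eq_re_trace_cfcAbs (A : Matrix E E ℂ) : traceNorm A = (CFC.abs A).trace.re := by
  have hA := posSemidef_conjTranspose_mul_self A
  rw [traceNorm, CFC.abs, star_eq_conjTranspose A, CFC.sqrt_eq_cfc, cfc_nnreal_eq_real _ _,
    hA.1.cfc_eq, IsHermitian.cfc, Unitary.conjStarAlgAut_apply]
  congr 5
  funext i
  simp [Real.coe_sqrt, Real.coe_toNNReal', hA.eigenvalues_nonneg i]

lemma traceNorm_nonneg (A : Matrix E E ℂ) : 0 ≤ traceNorm A := by
  rw [traceNorm_eq_re_trace_cfcAbs]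
  exact (CFC.abs_nonneg A).posSemidef.re_trace_nonneg

lemma traceNorm_reindex (e : E ≃ F) (A : Matrix E E ℂ) :
    traceNorm (reindex e e A) = traceNorm A := by
  rw [traceNorm_eq_re_trace_cfcAbs, cfcAbs_reindex, trace_reindex, traceNorm_eq_re_trace_cfcAbs]

lemma traceNorm_fromBlocks_zero (A : Matrix E E ℂ) (B : Matrix F F ℂ) :
    traceNorm (fromBlocks A 0 0 B) = traceNorm A + traceNorm B := by
  simp only [traceNorm_eq_re_trace_cfcAbs, cfcAbs_fromBlocks_zero, trace_fromBlocks,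
    Complex.add_re]

end TraceNorm

section GuessingProbability

variable {X E : Type*} [Fintype X] [Fintype E] [DecidableEq E] {ρ : X → Matrix E E ℂ}

lemma sum_re_trace_mul_le_pGuess (hρ : ∀ x, (ρ x).PosSemidef) {Γ : X → Matrix E E ℂ}
    (hΓ : ∀ x, (Γ x).PosSemidef) (hΓ_sum : ∑ x, Γ x = 1) :
    ∑ x, (Γ x * ρ x).trace.re ≤ pGuess ρ := by
  classical
  refine le_csSup ⟨∑ x, (ρ x).trace.re, ?_⟩ ⟨Γ, hΓ, hΓ_sum, rfl⟩
  rintro _ ⟨Γ', hΓ', hΓ'_sum, rfl⟩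
  refine sum_le_sum fun x _ => ?_
  have h_compl : (1 - Γ' x).PosSemidef := by
    rw [← hΓ'_sum, ← add_sum_erase _ _ (mem_univ x), add_sub_cancel_left]
    exact posSemidef_sum _ fun y _ => hΓ' y
  have := h_compl.re_trace_mul_nonneg (hρ x)
  rw [sub_mul, one_mul, trace_sub, Complex.sub_re] at this
  linarith

lemma pGuess_le {b : ℝ} (hb : 0 ≤ b)
    (h : ∀ Γ : X → Matrix E E ℂ, (∀ x, (Γ x).PosSemidef) → ∑ x, Γ x = 1 →
      ∑ x, (Γ x * ρ x).trace.re ≤ b) :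
    pGuess ρ ≤ b :=
  Real.sSup_le (by rintro _ ⟨Γ, hΓ, hΓ_sum, rfl⟩; exact h Γ hΓ hΓ_sum) hb

lemma pGuess_nonneg (hρ : ∀ x, (ρ x).PosSemidef) : 0 ≤ pGuess ρ :=
  Real.sSup_nonneg <| by
    rintro _ ⟨Γ, hΓ, -, rfl⟩
    exact sum_nonneg fun x _ => (hΓ x).re_trace_mul_nonneg (hρ x)

lemma pGuess_const_le {τ : Matrix E E ℂ} (hτ : τ.PosSemidef) :
    pGuess (fun _ : X => τ) ≤ τ.trace.re :=
  pGuess_le hτ.re_trace_nonneg fun Γ _ hΓ_sum => by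
    rw [← Complex.re_sum, ← trace_sum, ← sum_mul, hΓ_sum, one_mul]

end GuessingProbability

section DirectSum

variable {X : Type*} {a b : ℕ}

def cqDirectSum (ρ : X → Matrix (Fin a) (Fin a) ℂ) (σ : X → Matrix (Fin b) (Fin b) ℂ) (x : X) :
    Matrix (Fin (a + b)) (Fin (a + b)) ℂ :=
  reindex finSumFinEquiv finSumFinEquiv (fromBlocks (ρ x) 0 0 (σ x))

variable {ρ : X → Matrix (Fin a) (Fin a) ℂ} {σ : X → Matrix (Fin b) (Fin b) ℂ}

lemma posSemidef_cqDirectSum (hρ : ∀ x, (ρ x).PosSemidef) (hσ : ∀ x, (σ x).PosSemidef) (x : X) :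
    (cqDirectSum ρ σ x).PosSemidef :=
  ((hρ x).fromBlocks_zero (hσ x)).submatrix _

lemma trace_cqDirectSum (x : X) :
    (cqDirectSum ρ σ x).trace = (ρ x).trace + (σ x).trace := by
  rw [cqDirectSum, trace_reindex, trace_fromBlocks]

variable [Fintype X]

lemma pGuess_cqDirectSum_le (hρ : ∀ x, (ρ x).PosSemidef) (hσ : ∀ x, (σ x).PosSemidef) :
    pGuess (cqDirectSum ρ σ) ≤ pGuess ρ + pGuess σ := by
  refine pGuess_le (add_nonneg (pGuess_nonneg hρ) (pGuess_nonneg hσ)) fun Γ hΓ hΓ_sum => ?_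
  let e := (finSumFinEquiv : Fin a ⊕ Fin b ≃ Fin (a + b))
  have sum_submatrix_eq_one {F : Type} [Fintype F] [DecidableEq F] {f : F → Fin (a + b)}
      (hf : f.Injective) : ∑ x, (Γ x).submatrix f f = 1 := by
    rw [← submatrix_one f hf, ← hΓ_sum]
    ext i j
    simp [Matrix.sum_apply]
  calc ∑ x, (Γ x * cqDirectSum ρ σ x).trace.re
      = ∑ x, ((Γ x).submatrix (e ∘ Sum.inl) (e ∘ Sum.inl) * ρ x).trace.re +
          ∑ x, ((Γ x).submatrix (e ∘ Sum.inr) (e ∘ Sum.inr) * σ x).trace.re := by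
        simp only [cqDirectSum, trace_mul_reindex_fromBlocks_zero, Complex.add_re,
          sum_add_distrib]
        rfl
    _ ≤ pGuess ρ + pGuess σ := add_le_add
        (sum_re_trace_mul_le_pGuess hρ (fun x => (hΓ x).submatrix _)
          (sum_submatrix_eq_one (e.injective.comp Sum.inl_injective)))
        (sum_re_trace_mul_le_pGuess hσ (fun x => (hΓ x).submatrix _)
          (sum_submatrix_eq_one (e.injective.comp Sum.inr_injective)))

lemma smul_sum_sub_smul_sum_cqDirectSum (s : Finset X) (c c' : ℂ) :
    c • ∑ x ∈ s, cqDirectSum ρ σ x - c' • ∑ x, cqDirectSum ρ σ x =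
      reindex finSumFinEquiv finSumFinEquiv
        (fromBlocks (c • ∑ x ∈ s, ρ x - c' • ∑ x, ρ x) 0 0
          (c • ∑ x ∈ s, σ x - c' • ∑ x, σ x)) := by
  apply (reindex finSumFinEquiv finSumFinEquiv).symm.injective
  ext (i | i) (j | j) <;> simp [cqDirectSum, Matrix.sum_apply]

end DirectSum

section ExtractorError

variable {n d m a b : ℕ} (Ext : (Fin n → Bool) → (Fin d → Bool) → (Fin m → Bool))

lemma extractorError_nonneg (ρ : (Fin n → Bool) → Matrix (Fin a) (Fin a) ℂ) :
    0 ≤ extractorError Ext ρ :=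
  mul_nonneg (by norm_num) <| sum_nonneg fun _ _ => sum_nonneg fun _ _ => traceNorm_nonneg _

lemma extractorError_cqDirectSum (ρ : (Fin n → Bool) → Matrix (Fin a) (Fin a) ℂ)
    (σ : (Fin n → Bool) → Matrix (Fin b) (Fin b) ℂ) :
    extractorError Ext (cqDirectSum ρ σ) = extractorError Ext ρ + extractorError Ext σ := by
  simp only [extractorError, smul_sum_sub_smul_sum_cqDirectSum, traceNorm_reindex,
    traceNorm_fromBlocks_zero, sum_add_distrib, mul_add]

end ExtractorError

lemma add_inv_two_pow_le {k n : ℕ} (hk : k + 1 ≤ n) {p : ℝ} (hp : p ≤ 2 ^ (-((k : ℝ) + 1))) :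
    p + ((2 : ℝ) ^ n)⁻¹ ≤ 2 ^ (-(k : ℝ)) := by
  have h_inv : ((2 : ℝ) ^ n)⁻¹ ≤ 2 ^ (-((k : ℝ) + 1)) := by
    rw [← Real.rpow_natCast, ← Real.rpow_neg zero_le_two]
    exact Real.rpow_le_rpow_of_exponent_le one_le_two (neg_le_neg (by exact_mod_cast hk))
  calc p + ((2 : ℝ) ^ n)⁻¹ ≤ 2 ^ (-((k : ℝ) + 1)) + 2 ^ (-((k : ℝ) + 1)) := add_le_add hp h_inv
    _ = 2 ^ (-(k : ℝ)) := by rw [neg_add, Real.rpow_add two_pos, Real.rpow_neg_one]; ring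

/-- Extractors for normalized states work for subnormalized states:
a quantum-proof (k,ε)-strong extractor for normalized states is a
quantum-proof (k+1,2ε)-strong extractor for subnormalized states. -/
theorem extractor_norm_to_sub {n d m : ℕ} (k : ℕ) (hk : k + 1 ≤ n) (ε : ℝ)
    (Ext : (Fin n → Bool) → (Fin d → Bool) → (Fin m → Bool))
    (hExt : IsQProofStrongExtractorNorm Ext (k : ℝ) ε) :
    IsQProofStrongExtractorSub Ext ((k : ℝ) + 1) (2 * ε) := by
  intro dE ρ hρ h_sub h_guess
  set t := ∑ x, (ρ x).trace.re
  have ht : 0 ≤ t := sum_nonneg fun x _ => (hρ x).re_trace_nonneg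
  set c : ℝ := (1 - t) / 2 ^ n
  have hc : 0 ≤ c := div_nonneg (sub_nonneg.mpr h_sub) (by positivity)
  have hc_le : c ≤ ((2 : ℝ) ^ n)⁻¹ := by
    rw [← one_div]
    exact div_le_div_of_nonneg_right (sub_le_self 1 ht) (by positivity)
  set σ : (Fin n → Bool) → Matrix (Fin 1) (Fin 1) ℂ := fun _ => (c : ℂ) • 1
  have hσ : ∀ x, (σ x).PosSemidef := fun _ => PosSemidef.one.smul (by exact_mod_cast hc)
  have h_trσ : ∀ x, (σ x).trace.re = c := by simp [σ]
  have h_norm : ∑ x, (cqDirectSum ρ σ x).trace.re = 1 := by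
    simp only [trace_cqDirectSum, Complex.add_re, h_trσ, sum_add_distrib, sum_const, card_univ,
      Fintype.card_fun, Fintype.card_bool, Fintype.card_fin, nsmul_eq_mul]
    push_cast
    rw [show (2 : ℝ) ^ n * c = 1 - t from mul_div_cancel₀ _ (by positivity)]
    ring
  have h_guess' : pGuess (cqDirectSum ρ σ) ≤ 2 ^ (-(k : ℝ)) := calc
    _ ≤ pGuess ρ + pGuess σ := pGuess_cqDirectSum_le hρ hσ
    _ ≤ pGuess ρ + ((2 : ℝ) ^ n)⁻¹ := by
        grw [pGuess_const_le (hσ 0), h_trσ 0, hc_le]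
    _ ≤ 2 ^ (-(k : ℝ)) := add_inv_two_pow_le hk h_guess
  have h_err := hExt _ _ (posSemidef_cqDirectSum hρ hσ) h_norm h_guess'
  rw [extractorError_cqDirectSum] at h_err
  linarith [extractorError_nonneg Ext ρ, extractorError_nonneg Ext σ]
end
end
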